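/- Let L be a complete lattice with least element 0 and greatest element 1, 0 ≠ 1, n ≥ 2, and f : Lⁿ → L an n-ary aggregation function. Then for every x ∈ Lⁿ, f(x) = ⨅_{a ∈ Lⁿ_*} g_a(x), where Lⁿ_* = Lⁿ \ {(0,…,0), (1,…,1)} and the (possibly infinite) infimum is taken over all a ∈ Lⁿ_*. -/
import Mathlib


open Classical in
/-- The function `μ_a`: `μ_a(x) = 0` if `x ≤ a` and `x ≠ 1`, else `1`. -/
noncomputable def mu {L : Type*} [Lattice L] [BoundedOrder L] (a x : L) : L :=
  if x ≤ a ∧ x ≠ ⊤ then ⊥ else ⊤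

open Classical in
/-- The binary operation `⊕_b`: `1` if both arguments are `1`, `0` if both are `0`,
and `b` otherwise. -/
noncomputable def oplus {L : Type*} [Lattice L] [BoundedOrder L] (b x y : L) : L :=
  if x = ⊤ ∧ y = ⊤ then ⊤ else if x = ⊥ ∧ y = ⊥ then ⊥ else b

/-- The iterated value `x₁ ⊕_b ⋯ ⊕_b xₙ`. -/
noncomputable def iterOplus {L : Type*} [Lattice L] [BoundedOrder L] (b : L) :
    ∀ {n : ℕ}, (Fin (n + 1) → L) → L
  | 0, x => x 0
  | n + 1, x => oplus b (iterOplus b fun i : Fin (n + 1) => x i.castSucc) (x (Fin.last (n + 1)))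

/-- An `n`-ary aggregation function on a bounded lattice: monotone (componentwise
order on tuples) and preserving the bottom and top tuples. -/
def IsAgg {L : Type*} [Lattice L] [BoundedOrder L] {n : ℕ}
    (A : (Fin n → L) → L) : Prop :=
  Monotone A ∧ A ⊥ = ⊥ ∧ A ⊤ = ⊤

open Classical in
/-- The function `g_a(x) = (⋁_{i ∈ Ĵ_a} μ_{aᵢ}(xᵢ)) ∨ (x₁ ⊕_{f(a)} ⋯ ⊕_{f(a)} xₙ)`,
where `Ĵ_a = {i : aᵢ ≠ 1}`. -/
noncomputable def gAux {L : Type*} [Lattice L] [BoundedOrder L] {n : ℕ}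
    (f : (Fin (n + 1) → L) → L) (a x : Fin (n + 1) → L) : L :=
  ((Finset.univ.filter fun i => a i ≠ ⊤).sup fun i => mu (a i) (x i)) ⊔ iterOplus (f a) x

section AuxLemmas
variable {L : Type*} [Lattice L] [BoundedOrder L]

lemma oplus_self (b y : L) : oplus b b y = b := by
  unfold oplus
  split_ifs with h1 h2
  · exact h1.1.symm
  · exact h2.1.symm
  · rfl

lemma iterOplus_top (b : L) : ∀ {n : ℕ}, iterOplus b (fun _ : Fin (n + 1) => ⊤) = ⊤
  | 0 => rfl
  | n + 1 => by
    show oplus b (iterOplus b fun _ => ⊤) ⊤ = ⊤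
    rw [iterOplus_top]
    simp [oplus]

lemma iterOplus_bot (b : L) : ∀ {n : ℕ}, iterOplus b (fun _ : Fin (n + 1) => ⊥) = ⊥
  | 0 => rfl
  | n + 1 => by
    show oplus b (iterOplus b fun _ => ⊥) ⊥ = ⊥
    rw [iterOplus_bot]
    unfold oplus
    split_ifs with h1 h2
    · exact h1.1.symm
    · rfl
    · exact absurd ⟨rfl, rfl⟩ h2

lemma iterOplus_mid (h01 : (⊥ : L) ≠ ⊤) (b : L) :
    ∀ (n : ℕ) (x : Fin (n + 2) → L),
      (¬ ∀ i, x i = ⊥) → (¬ ∀ i, x i = ⊤) → iterOplus b x = b := by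
  intro n
  induction n with
  | zero =>
    intro x hb ht
    show oplus b (iterOplus b fun i : Fin 1 => x i.castSucc) (x (Fin.last 1)) = b
    show oplus b (x (0 : Fin 1).castSucc) (x (Fin.last 1)) = b
    unfold oplus
    split_ifs with h1 h2
    · exact absurd (by intro i; fin_cases i <;> simp_all [Fin.last]) ht
    · exact absurd (by intro i; fin_cases i <;> simp_all [Fin.last]) hb
    · rfl
  | succ m ih =>
    intro x hb ht
    show oplus b (iterOplus b fun i : Fin (m + 2) => x i.castSucc) (x (Fin.last (m + 2))) = b
    by_cases hyt : ∀ i : Fin (m + 2), x i.castSucc = ⊤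
    · have : (fun i : Fin (m + 2) => x i.castSucc) = fun _ => ⊤ := funext hyt
      rw [this, iterOplus_top]
      have hlast : x (Fin.last (m + 2)) ≠ ⊤ := by
        intro hl
        apply ht
        intro i
        rcases Fin.eq_castSucc_or_eq_last i with ⟨j, rfl⟩ | rfl
        · exact hyt j
        · exact hl
      unfold oplus
      split_ifs with h1 h2
      · exact absurd h1.2 hlast
      · exact absurd h2.1.symm h01
      · rfl
    · by_cases hyb : ∀ i : Fin (m + 2), x i.castSucc = ⊥
      · have : (fun i : Fin (m + 2) => x i.castSucc) = fun _ => ⊥ := funext hyb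
        rw [this, iterOplus_bot]
        have hlast : x (Fin.last (m + 2)) ≠ ⊥ := by
          intro hl
          apply hb
          intro i
          rcases Fin.eq_castSucc_or_eq_last i with ⟨j, rfl⟩ | rfl
          · exact hyb j
          · exact hl
        unfold oplus
        split_ifs with h1 h2
        · exact absurd h1.1 h01
        · exact absurd h2.2 hlast
        · rfl
      · rw [ih _ hyb hyt]
        exact oplus_self b _
end AuxLemmas

/-- Let `L` be a complete lattice with `0 ≠ 1`, `n ≥ 2` and `f : Lⁿ → L` an
aggregation function.  Then `f(x) = ⨅_{a ∈ Lⁿ_*} g_a(x)` for every `x ∈ Lⁿ`, where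
`Lⁿ_* = Lⁿ \ {(0,…,0), (1,…,1)}` and the (possibly infinite) infimum is taken over
all `a ∈ Lⁿ_*`.
(A tuple of length `n ≥ 2` is written as `x : Fin (n+1) → L` with `n ≥ 1`.) -/
theorem agg_eq_iInf_gAux {L : Type*} [CompleteLattice L]
    (h01 : (⊥ : L) ≠ ⊤) (n : ℕ) (hn : 1 ≤ n)
    (f : (Fin (n + 1) → L) → L) (hf : IsAgg f) (x : Fin (n + 1) → L) :
    f x = ⨅ a ∈ {a : Fin (n + 1) → L | a ≠ ⊥ ∧ a ≠ ⊤}, gAux f a x := by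
  classical
  obtain ⟨k, rfl⟩ : ∃ k, n = k + 1 := ⟨n - 1, (Nat.succ_pred_eq_of_pos hn).symm⟩
  have hbot : ∀ y : Fin (k + 2) → L, y = ⊥ ↔ ∀ i, y i = ⊥ := by
    intro y; constructor
    · rintro rfl i; rfl
    · intro h; funext i; exact h i
  have htop : ∀ y : Fin (k + 2) → L, y = ⊤ ↔ ∀ i, y i = ⊤ := by
    intro y; constructor
    · rintro rfl i; rfl
    · intro h; funext i; exact h i
  apply le_antisymm
  · -- f x ≤ gAux f a x for every a ∈ S
    apply le_iInf₂
    intro a ha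
    by_cases hxt : x = ⊤
    · subst hxt
      have : iterOplus (f a) (⊤ : Fin (k + 2) → L) = ⊤ := by
        have : (⊤ : Fin (k + 2) → L) = fun _ => ⊤ := rfl
        rw [this, iterOplus_top]
      calc f ⊤ ≤ ⊤ := le_top
        _ = iterOplus (f a) ⊤ := this.symm
        _ ≤ gAux f a ⊤ := le_sup_right
    by_cases hxb : x = ⊥
    · subst hxb
      rw [hf.2.1]
      exact bot_le
    · have hiter : iterOplus (f a) x = f a :=
        iterOplus_mid h01 (f a) k x (fun h => hxb ((hbot x).2 h))
          (fun h => hxt ((htop x).2 h))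
      by_cases hmu : ∃ i, a i ≠ ⊤ ∧ ¬(x i ≤ a i ∧ x i ≠ ⊤)
      · obtain ⟨i, hi1, hi2⟩ := hmu
        have hmem : i ∈ Finset.univ.filter fun j => a j ≠ ⊤ := by
          simp [hi1]
        have : mu (a i) (x i) = ⊤ := by
          unfold mu; rw [if_neg hi2]
        calc f x ≤ ⊤ := le_top
          _ = mu (a i) (x i) := this.symm
          _ ≤ (Finset.univ.filter fun j => a j ≠ ⊤).sup (fun j => mu (a j) (x j)) :=
              Finset.le_sup (f := fun j => mu (a j) (x j)) hmem
          _ ≤ gAux f a x := le_sup_left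
      · push_neg at hmu
        have hxa : x ≤ a := by
          intro i
          by_cases hai : a i = ⊤
          · rw [hai]; exact le_top
          · exact (hmu i hai).1
        calc f x ≤ f a := hf.1 hxa
          _ = iterOplus (f a) x := hiter.symm
          _ ≤ gAux f a x := le_sup_right
  · -- iInf ≤ f x
    by_cases hxt : x = ⊤
    · subst hxt
      rw [hf.2.2]
      exact le_top
    by_cases hxb : x = ⊥
    · subst hxb
      set a : Fin (k + 2) → L := fun i => if i = 0 then ⊤ else ⊥ with ha
      have haS : a ∈ {a : Fin (k + 2) → L | a ≠ ⊥ ∧ a ≠ ⊤} := by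
        constructor
        · intro h
          have := congrFun h 0
          simp [ha] at this
          exact h01 this.symm
        · intro h
          have := congrFun h 1
          simp [ha, Fin.one_eq_zero_iff] at this
          exact h01 this
      have hg : gAux f a ⊥ = ⊥ := by
        unfold gAux
        have h1 : ((Finset.univ.filter fun i => a i ≠ ⊤).sup fun i => mu (a i) ((⊥ : Fin (k+2) → L) i)) = ⊥ := by
          apply (Finset.sup_eq_bot_iff _ _).2
          intro i _
          unfold mu
          rw [if_pos ⟨bot_le, h01⟩]
        have h2 : iterOplus (f a) (⊥ : Fin (k + 2) → L) = ⊥ := by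
          have : (⊥ : Fin (k + 2) → L) = fun _ => ⊥ := rfl
          rw [this, iterOplus_bot]
        rw [h1, h2, sup_idem]
      rw [hf.2.1, ← hg]
      exact biInf_le _ haS
    · have hxS : x ∈ {a : Fin (k + 2) → L | a ≠ ⊥ ∧ a ≠ ⊤} := ⟨hxb, hxt⟩
      have hg : gAux f x x = f x := by
        unfold gAux
        have h1 : ((Finset.univ.filter fun i => x i ≠ ⊤).sup fun i => mu (x i) (x i)) = ⊥ := by
          apply (Finset.sup_eq_bot_iff _ _).2
          intro i hi
          simp only [Finset.mem_filter] at hi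
          unfold mu
          rw [if_pos ⟨le_refl _, hi.2⟩]
        have h2 : iterOplus (f x) x = f x :=
          iterOplus_mid h01 (f x) k x (fun h => hxb ((hbot x).2 h))
            (fun h => hxt ((htop x).2 h))
        rw [h1, h2, bot_sup_eq]
      rw [← hg]
      exact biInf_le _ hxS
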